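/- Fix ρ₀ > 0 and set a := (√3/2)^{1/2}·ρ₀ and b := ((2+√3)/2)^{1/2}·ρ₀. The function w(r) := −(r² − (√3/2)ρ₀²)/(ρ₀⁴ − (r² − (√3/2)ρ₀²)²)^{1/2}, defined for 0 < r < b, is differentiable and satisfies w'(r) = (2w(r)³ + 2w(r) − √3(1 + w(r)²)^{3/2})/r on (0, b); moreover w(a) = 0, w(r) < √3 for all r ∈ (0, b), w(r) → √3 as r → 0⁺, w(r) → −∞ as r → b⁻, and for each fixed r > 0 one has w(r) → √3 as ρ₀ → ∞ (where w is defined once b > r). -/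

import Mathlib

/-!
Write `s = r² - (√3/2)ρ₀²`, so that the radicand is `ρ₀⁴ - s²` and `1 + w² = ρ₀⁴/(ρ₀⁴ - s²)`;
the ODE is then a rational identity in `r`, `s` and `√(ρ₀⁴ - s²)`. The radicand is positive
exactly when `|s| < ρ₀²`, i.e. on `[0, b)`: at `r = 0` it equals `ρ₀⁴/4`, which gives `w(0) = √3`,
and at `r = b` it vanishes while the numerator tends to `-ρ₀²`. Finally `w` is scale invariant,
`wTypeII ρ r = wTypeII 1 (r/ρ)`, so the limit `ρ → ∞` is the value of `wTypeII 1` at `0`.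
-/

open Filter

/-- The type-II solution `w(r) = −(r² − (√3/2)ρ₀²)/√(ρ₀⁴ − (r² − (√3/2)ρ₀²)²)`. -/
noncomputable def wTypeII (ρ₀ r : ℝ) : ℝ :=
  -(r ^ 2 - (Real.sqrt 3 / 2) * ρ₀ ^ 2) /
    Real.sqrt (ρ₀ ^ 4 - (r ^ 2 - (Real.sqrt 3 / 2) * ρ₀ ^ 2) ^ 2)

open Real Topology

lemma sqrt_three_sq : √3 ^ 2 = 3 := sq_sqrt (by norm_num)

lemma sq_lt_mul_sq_of_lt_sqrt_mul {k ρ r : ℝ} (hk : 0 ≤ k) (hr0 : 0 ≤ r) (hr : r < √k * ρ) :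
    r ^ 2 < k * ρ ^ 2 := by
  simpa [mul_pow, sq_sqrt hk] using pow_lt_pow_left₀ hr hr0 two_ne_zero

section
variable {ρ₀ r : ℝ}

lemma wTypeII_radicand_pos (hr : r ^ 2 < (2 + √3) / 2 * ρ₀ ^ 2) :
    0 < ρ₀ ^ 4 - (r ^ 2 - √3 / 2 * ρ₀ ^ 2) ^ 2 := by
  have h3 : √3 < 2 := by nlinarith [sqrt_three_sq, sqrt_nonneg 3]
  have hupper : r ^ 2 - √3 / 2 * ρ₀ ^ 2 < ρ₀ ^ 2 := by linarith
  have hlower : -ρ₀ ^ 2 < r ^ 2 - √3 / 2 * ρ₀ ^ 2 := by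
    nlinarith [sq_nonneg r, sq_nonneg ρ₀, sqrt_nonneg 3]
  nlinarith [mul_pos (sub_pos.2 hupper) (neg_lt_iff_pos_add.1 hlower)]

lemma sqrt_one_add_wTypeII_sq (hr : r ^ 2 < (2 + √3) / 2 * ρ₀ ^ 2) :
    √(1 + wTypeII ρ₀ r ^ 2) = ρ₀ ^ 2 / √(ρ₀ ^ 4 - (r ^ 2 - √3 / 2 * ρ₀ ^ 2) ^ 2) := by
  have hD := wTypeII_radicand_pos hr
  rw [wTypeII]
  set s := r ^ 2 - √3 / 2 * ρ₀ ^ 2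
  rw [← sqrt_sq (by positivity : 0 ≤ ρ₀ ^ 2 / √(ρ₀ ^ 4 - s ^ 2)), div_pow, div_pow, sq_sqrt hD.le]
  congr 1
  field_simp
  ring

lemma hasDerivAt_wTypeII (hr0 : 0 < r) (hr : r ^ 2 < (2 + √3) / 2 * ρ₀ ^ 2) :
    HasDerivAt (wTypeII ρ₀)
      ((2 * wTypeII ρ₀ r ^ 3 + 2 * wTypeII ρ₀ r - √3 * √(1 + wTypeII ρ₀ r ^ 2) ^ 3) / r) r := by
  have hD := wTypeII_radicand_pos hr
  set c := √3 / 2 * ρ₀ ^ 2 with hc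
  have hs : HasDerivAt (fun x : ℝ => x ^ 2 - c) (2 * r) r := by
    simpa using (hasDerivAt_pow 2 r).sub_const c
  have hq : HasDerivAt (fun x : ℝ => √(ρ₀ ^ 4 - (x ^ 2 - c) ^ 2))
      (-(2 * (r ^ 2 - c) ^ 1 * (2 * r)) / (2 * √(ρ₀ ^ 4 - (r ^ 2 - c) ^ 2))) r :=
    ((hs.pow 2).const_sub _).sqrt hD.ne'
  refine (hs.neg.div hq (sqrt_pos.2 hD).ne').congr_deriv ?_
  rw [sqrt_one_add_wTypeII_sq hr, wTypeII]
  set s := r ^ 2 - c with hs_def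
  set q := √(ρ₀ ^ 4 - s ^ 2)
  have hq2 : q ^ 2 = ρ₀ ^ 4 - s ^ 2 := sq_sqrt hD.le
  have hqpos : 0 < q := sqrt_pos.2 hD
  simp only [Pi.neg_apply]
  field_simp
  linear_combination (2 * s - 2 * r ^ 2) * hq2 + 2 * ρ₀ ^ 4 * hs_def - 2 * ρ₀ ^ 4 * hc

lemma continuousAt_wTypeII (hr : r ^ 2 < (2 + √3) / 2 * ρ₀ ^ 2) :
    ContinuousAt (wTypeII ρ₀) r := by
  unfold wTypeII
  exact ContinuousAt.div (by fun_prop) (by fun_prop) (sqrt_pos.2 (wTypeII_radicand_pos hr)).ne'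

lemma wTypeII_zero (hρ₀ : ρ₀ ≠ 0) : wTypeII ρ₀ 0 = √3 := by
  have hradicand : ρ₀ ^ 4 - ((0 : ℝ) ^ 2 - √3 / 2 * ρ₀ ^ 2) ^ 2 = (ρ₀ ^ 2 / 2) ^ 2 := by
    linear_combination (-ρ₀ ^ 4 / 4) * sqrt_three_sq
  rw [wTypeII, hradicand, sqrt_sq (by positivity)]
  field_simp
  ring

lemma wTypeII_lt_sqrt_three (hr0 : 0 < r) (hr : r ^ 2 < (2 + √3) / 2 * ρ₀ ^ 2) :
    wTypeII ρ₀ r < √3 := by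
  have hD := wTypeII_radicand_pos hr
  rw [wTypeII]
  set c := √3 / 2 * ρ₀ ^ 2 with hc
  set s := r ^ 2 - c with hs
  have hq2 : √(ρ₀ ^ 4 - s ^ 2) ^ 2 = ρ₀ ^ 4 - s ^ 2 := sq_sqrt hD.le
  have hq := sqrt_pos.2 hD
  rw [div_lt_iff₀ hq]
  rcases le_or_gt 0 s with hs_nonneg | hs_neg
  · exact (neg_nonpos.2 hs_nonneg).trans_lt (by positivity)
  · -- `-c < s < 0` gives `s² < c² = 3ρ₀⁴/4`, hence `s² < 3(ρ₀⁴ - s²)`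
    have hs_sq : s ^ 2 < c ^ 2 := sq_lt_sq' (by nlinarith) (by nlinarith)
    apply lt_of_pow_lt_pow_left₀ 2 (by positivity)
    rw [mul_pow, sqrt_three_sq, hq2]
    nlinarith [sqrt_three_sq]

lemma tendsto_wTypeII_nhdsLT (hρ₀ : 0 < ρ₀) :
    Tendsto (wTypeII ρ₀) (𝓝[<] (√((2 + √3) / 2) * ρ₀)) atBot := by
  set b := √((2 + √3) / 2) * ρ₀
  have hb2 : b ^ 2 = (2 + √3) / 2 * ρ₀ ^ 2 := by
    rw [mul_pow, sq_sqrt (by positivity)]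
  have hnum : Tendsto (fun r : ℝ => -(r ^ 2 - √3 / 2 * ρ₀ ^ 2)) (𝓝[<] b) (𝓝 (-ρ₀ ^ 2)) := by
    have h : ContinuousAt (fun r : ℝ => -(r ^ 2 - √3 / 2 * ρ₀ ^ 2)) b := by fun_prop
    convert h.tendsto.mono_left nhdsWithin_le_nhds using 2
    rw [hb2]
    ring
  have hden : Tendsto (fun r : ℝ => √(ρ₀ ^ 4 - (r ^ 2 - √3 / 2 * ρ₀ ^ 2) ^ 2)) (𝓝[<] b)
      (𝓝[>] 0) := by
    refine tendsto_nhdsWithin_iff.2 ⟨?_, ?_⟩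
    · have h : ContinuousAt (fun r : ℝ => √(ρ₀ ^ 4 - (r ^ 2 - √3 / 2 * ρ₀ ^ 2) ^ 2)) b := by
        fun_prop
      convert h.tendsto.mono_left nhdsWithin_le_nhds using 2
      rw [hb2, eq_comm, sqrt_eq_zero']
      linarith
    · filter_upwards [Ioo_mem_nhdsLT (by positivity : 0 < b)] with r hr
      exact sqrt_pos.2 (wTypeII_radicand_pos (sq_lt_mul_sq_of_lt_sqrt_mul (by positivity) hr.1.le hr.2))
  exact (hnum.neg_mul_atTop (by simp; positivity) hden.inv_tendsto_nhdsGT_zero).congr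
    fun r => (div_eq_mul_inv _ _).symm

lemma wTypeII_eq_wTypeII_one_div {ρ : ℝ} (hρ : ρ ≠ 0) : wTypeII ρ r = wTypeII 1 (r / ρ) := by
  have hρ2 : 0 < ρ ^ 2 := by positivity
  have hnum : -(r ^ 2 - √3 / 2 * ρ ^ 2) = ρ ^ 2 * -((r / ρ) ^ 2 - √3 / 2 * 1 ^ 2) := by
    field_simp
  have hradicand : ρ ^ 4 - (r ^ 2 - √3 / 2 * ρ ^ 2) ^ 2
      = (ρ ^ 2) ^ 2 * (1 ^ 4 - ((r / ρ) ^ 2 - √3 / 2 * 1 ^ 2) ^ 2) := by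
    field_simp
  rw [wTypeII, wTypeII, hnum, hradicand, sqrt_mul (by positivity), sqrt_sq hρ2.le,
    mul_div_mul_left _ _ hρ2.ne']

theorem tendsto_wTypeII_atTop (r : ℝ) : Tendsto (fun ρ => wTypeII ρ r) atTop (𝓝 √3) := by
  have hscaled : Tendsto (fun ρ => wTypeII 1 (r / ρ)) atTop (𝓝 √3) := by
    rw [← wTypeII_zero one_ne_zero]
    exact (continuousAt_wTypeII (by norm_num; positivity)).tendsto.comp
      (tendsto_const_nhds.div_atTop tendsto_id)
  refine hscaled.congr' ?_
  filter_upwards [eventually_gt_atTop 0] with ρ hρ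
  exact (wTypeII_eq_wTypeII_one_div hρ.ne').symm

end

/-- for `ρ₀ > 0`, `a = √(√3/2)·ρ₀` and `b = √((2+√3)/2)·ρ₀`, the function
`wTypeII ρ₀` solves `w' = (2w³ + 2w − √3(1+w²)^{3/2})/r` on `(0, b)`, vanishes at `a`,
satisfies `w < √3` on `(0, b)`, tends to `√3` as `r → 0⁺`, to `−∞` as `r → b⁻`, and for
each fixed `r > 0` tends to `√3` as `ρ₀ → ∞`. -/
theorem stmt_6 (ρ₀ : ℝ) (hρ₀ : 0 < ρ₀) (a b : ℝ)
    (ha : a = Real.sqrt (Real.sqrt 3 / 2) * ρ₀)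
    (hb : b = Real.sqrt ((2 + Real.sqrt 3) / 2) * ρ₀) :
    (∀ r ∈ Set.Ioo (0 : ℝ) b,
      HasDerivAt (wTypeII ρ₀)
        ((2 * (wTypeII ρ₀ r) ^ 3 + 2 * wTypeII ρ₀ r
          - Real.sqrt 3 * (Real.sqrt (1 + (wTypeII ρ₀ r) ^ 2)) ^ 3) / r) r)
    ∧ wTypeII ρ₀ a = 0
    ∧ (∀ r ∈ Set.Ioo (0 : ℝ) b, wTypeII ρ₀ r < Real.sqrt 3)
    ∧ Tendsto (wTypeII ρ₀) (nhdsWithin 0 (Set.Ioi 0)) (nhds (Real.sqrt 3))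
    ∧ Tendsto (wTypeII ρ₀) (nhdsWithin b (Set.Iio b)) atBot
    ∧ (∀ r : ℝ, 0 < r → Tendsto (fun ρ => wTypeII ρ r) atTop (nhds (Real.sqrt 3))) := by
  have hdomain : ∀ r ∈ Set.Ioo 0 b, r ^ 2 < (2 + √3) / 2 * ρ₀ ^ 2 := fun r hr =>
    sq_lt_mul_sq_of_lt_sqrt_mul (by positivity) hr.1.le (hb ▸ hr.2)
  refine ⟨fun r hr => hasDerivAt_wTypeII hr.1 (hdomain r hr), ?_,
    fun r hr => wTypeII_lt_sqrt_three hr.1 (hdomain r hr), ?_, hb ▸ tendsto_wTypeII_nhdsLT hρ₀,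
    fun r _ => tendsto_wTypeII_atTop r⟩
  · rw [wTypeII, ha, mul_pow, sq_sqrt (by positivity)]
    simp
  · rw [← wTypeII_zero hρ₀.ne']
    exact (continuousAt_wTypeII (by simp; positivity)).tendsto.mono_left nhdsWithin_le_nhds
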